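/- arXiv:0908.0375 — 6 statements merged into one kernel-verified Lean document; each statement's English description precedes it below -/
import Mathlib

section
/- Let P_1,…,P_n be mutually independent random variables on a probability space Ω, with P_i taking values in a finite nonempty set D_i. Let A_1,…,A_m be events such that each A_j is measurable with respect to the σ-algebra generated by the variables {P_i : i ∈ vbl(j)} for some set vbl(j) ⊆ {1,…,n}, and define Γ(j) = {j' ≠ j : vbl(j) ∩ vbl(j') ≠ ∅}. If there exists an assignment of reals x : {1,…,m} → (0,1) such that Pr[A_j] ≤ x(j)·∏_{j'∈Γ(j)} (1 − x(j')) for every j, then Pr[⋂_{j=1}^m A_jᶜ] ≥ ∏_{j=1}^m (1 − x(j)) > 0; in particular the set of outcomes at which none of the events A_1,…,A_m happens is nonempty. -/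
open MeasureTheory ProbabilityTheory Finset

/-!
Write `C S = ⋂ k ∈ S, (A k)ᶜ`. By strong induction on `S` one shows
`Pr[A j ∩ C S] ≤ x j · Pr[C S]` for `j ∉ S`: split `S` into the neighbours `S₁ = S ∩ Γ j`
and the rest `S₂`. Since `A j` is independent of `C S₂`,
`Pr[A j ∩ C S] ≤ Pr[A j] Pr[C S₂] ≤ x j ∏_{Γ j} (1 - x) Pr[C S₂]`, while peeling the events of
`S₁` off one at a time with the induction hypothesis gives `Pr[C S] ≥ ∏_{S₁} (1 - x) Pr[C S₂]`.
The same peeling over all events, starting from `Pr[C ∅] = 1`, yields `Pr[C univ] ≥ ∏ (1 - x)`.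
-/

lemma measure_inter_biInter_compl_eq_mul_of_disjoint {Ω ι κ : Type*} [mΩ : MeasurableSpace Ω]
    {μ : Measure Ω} {M : κ → MeasurableSpace Ω} (hle : ∀ i, M i ≤ mΩ) (hM : iIndep M μ)
    {A : ι → Set Ω} {vbl : ι → Finset κ} (hA : ∀ j, MeasurableSet[⨆ i ∈ vbl j, M i] (A j))
    {j : ι} {S : Finset ι} (hS : ∀ k ∈ S, Disjoint (vbl j) (vbl k)) :
    μ (A j ∩ ⋂ k ∈ S, (A k)ᶜ) = μ (A j) * μ (⋂ k ∈ S, (A k)ᶜ) := by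
  have hC : MeasurableSet[⨆ i ∈ (↑(vbl j) : Set κ)ᶜ, M i] (⋂ k ∈ S, (A k)ᶜ) :=
    Finset.measurableSet_biInter S fun k hk =>
      have hsub : ⨆ i ∈ vbl k, M i ≤ ⨆ i ∈ (↑(vbl j) : Set κ)ᶜ, M i :=
        biSup_mono fun i hi => disjoint_right.1 (hS k hk) hi
      (hsub _ (hA k)).compl
  exact (Indep_iff _ _ μ).1 (indep_biSup_compl hle hM _) _ _ (hA j) hC

def IsLopsidedDependencyGraph {Ω ι : Type*} [MeasurableSpace Ω] (μ : Measure Ω)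
    (A : ι → Set Ω) (Γ : ι → Finset ι) : Prop :=
  ∀ j (S : Finset ι), j ∉ S → Disjoint S (Γ j) →
    μ.real (A j ∩ ⋂ k ∈ S, (A k)ᶜ) ≤ μ.real (A j) * μ.real (⋂ k ∈ S, (A k)ᶜ)

section LocalLemma

variable {Ω ι : Type*} [MeasurableSpace Ω] {μ : Measure Ω} [DecidableEq ι]
  {A : ι → Set Ω} {x : ι → ℝ} {j : ι}

lemma measureReal_biInter_compl_insert [IsFiniteMeasure μ] (hA : MeasurableSet (A j))
    (S : Finset ι) :
    μ.real (⋂ k ∈ insert j S, (A k)ᶜ) =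
      μ.real (⋂ k ∈ S, (A k)ᶜ) - μ.real (A j ∩ ⋂ k ∈ S, (A k)ᶜ) := by
  rw [set_biInter_insert, Set.inter_comm, ← Set.sdiff_eq, Set.inter_comm,
    ← measureReal_inter_add_sdiff (s := ⋂ k ∈ S, (A k)ᶜ) hA]
  ring

lemma one_sub_mul_le_measureReal_biInter_compl_insert [IsFiniteMeasure μ]
    (hA : MeasurableSet (A j)) {S : Finset ι}
    (h : μ.real (A j ∩ ⋂ k ∈ S, (A k)ᶜ) ≤ x j * μ.real (⋂ k ∈ S, (A k)ᶜ)) :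
    (1 - x j) * μ.real (⋂ k ∈ S, (A k)ᶜ) ≤ μ.real (⋂ k ∈ insert j S, (A k)ᶜ) := by
  rw [measureReal_biInter_compl_insert hA]
  linarith

lemma prod_one_sub_mul_le_measureReal_biInter_compl_union [IsFiniteMeasure μ]
    (hA : ∀ k, MeasurableSet (A k)) (hx : ∀ k, x k ≤ 1) {R T : Finset ι}
    (h : ∀ R' ⊆ R, ∀ k ∈ R \ R',
      μ.real (A k ∩ ⋂ i ∈ R' ∪ T, (A i)ᶜ) ≤ x k * μ.real (⋂ i ∈ R' ∪ T, (A i)ᶜ)) :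
    (∏ k ∈ R, (1 - x k)) * μ.real (⋂ k ∈ T, (A k)ᶜ) ≤ μ.real (⋂ k ∈ R ∪ T, (A k)ᶜ) := by
  induction R using Finset.induction_on with
  | empty => simp
  | insert k R hk ih =>
    have ih := ih fun R' hR' i hi => h R' (hR'.trans (subset_insert k R)) i
      (sdiff_subset_sdiff (subset_insert k R) le_rfl hi)
    have hstep := one_sub_mul_le_measureReal_biInter_compl_insert (x := x) (hA k)
      (h R (subset_insert k R) k (by simp [hk]))
    rw [prod_insert hk, insert_union, mul_assoc]
    exact (mul_le_mul_of_nonneg_left ih (sub_nonneg.2 (hx k))).trans hstep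

lemma measureReal_inter_biInter_compl_le [IsFiniteMeasure μ] {Γ : ι → Finset ι}
    (hA : ∀ k, MeasurableSet (A k)) (hx : ∀ k, x k ∈ Set.Icc 0 1)
    (hΓ : IsLopsidedDependencyGraph μ A Γ)
    (hprob : ∀ j, μ.real (A j) ≤ x j * ∏ k ∈ Γ j, (1 - x k)) (S : Finset ι) (hj : j ∉ S) :
    μ.real (A j ∩ ⋂ k ∈ S, (A k)ᶜ) ≤ x j * μ.real (⋂ k ∈ S, (A k)ᶜ) := by
  induction S using Finset.strongInduction generalizing j with
  | H S ih =>
    have hchain : (∏ k ∈ S ∩ Γ j, (1 - x k)) * μ.real (⋂ k ∈ S \ Γ j, (A k)ᶜ) ≤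
        μ.real (⋂ k ∈ S, (A k)ᶜ) := by
      have := prod_one_sub_mul_le_measureReal_biInter_compl_union hA (fun k => (hx k).2)
        (R := S ∩ Γ j) (T := S \ Γ j) fun R' hR' k hk => by
          refine ih _ ((ssubset_iff_of_subset ?_).2 ⟨k, ?_, ?_⟩) (j := k) ?_ <;> grind
      rwa [union_comm, sdiff_union_inter] at this
    have hprod : ∏ k ∈ Γ j, (1 - x k) ≤ ∏ k ∈ S ∩ Γ j, (1 - x k) :=
      prod_le_prod_of_subset_of_le_one inter_subset_right
        (fun k _ => sub_nonneg.2 (hx k).2) (fun k _ _ => sub_le_self _ (hx k).1)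
    have hx0 : 0 ≤ x j := (hx j).1
    calc μ.real (A j ∩ ⋂ k ∈ S, (A k)ᶜ) ≤ μ.real (A j ∩ ⋂ k ∈ S \ Γ j, (A k)ᶜ) :=
          measureReal_mono (Set.inter_subset_inter_right _
            (Set.biInter_subset_biInter_left sdiff_subset))
      _ ≤ μ.real (A j) * μ.real (⋂ k ∈ S \ Γ j, (A k)ᶜ) :=
          hΓ j _ (fun h => hj (sdiff_subset h)) sdiff_disjoint
      _ ≤ (x j * ∏ k ∈ Γ j, (1 - x k)) * μ.real (⋂ k ∈ S \ Γ j, (A k)ᶜ) := by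
          gcongr; exact hprob j
      _ ≤ x j * ((∏ k ∈ S ∩ Γ j, (1 - x k)) * μ.real (⋂ k ∈ S \ Γ j, (A k)ᶜ)) := by
          rw [mul_assoc]; gcongr
      _ ≤ x j * μ.real (⋂ k ∈ S, (A k)ᶜ) := by gcongr

theorem prod_one_sub_le_measureReal_iInter_compl [Fintype ι] [IsProbabilityMeasure μ]
    {Γ : ι → Finset ι} (hA : ∀ k, MeasurableSet (A k)) (hx : ∀ k, x k ∈ Set.Icc 0 1)
    (hΓ : IsLopsidedDependencyGraph μ A Γ)
    (hprob : ∀ j, μ.real (A j) ≤ x j * ∏ k ∈ Γ j, (1 - x k)) :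
    ∏ j, (1 - x j) ≤ μ.real (⋂ j, (A j)ᶜ) := by
  have := prod_one_sub_mul_le_measureReal_biInter_compl_union hA (fun k => (hx k).2)
    (R := univ) (T := ∅) fun R' _ k hk =>
      measureReal_inter_biInter_compl_le hA hx hΓ hprob _ (by simpa using hk)
  simpa using this

end LocalLemma

theorem lll_general_variable_framework_general
    {Ω : Type*} [MeasurableSpace Ω] (μ : Measure Ω) [IsProbabilityMeasure μ]
    {n m : ℕ} (D : Fin n → Type*)
    [mD : ∀ i, MeasurableSpace (D i)]
    (P : ∀ i, Ω → D i) (hPmeas : ∀ i, Measurable (P i))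
    (hindep : iIndepFun (m := mD) P μ)
    (A : Fin m → Set Ω) (vbl : Fin m → Finset (Fin n))
    (hA : ∀ j, MeasurableSet[⨆ i ∈ vbl j, MeasurableSpace.comap (P i) (mD i)] (A j))
    (Γ : Fin m → Finset (Fin m))
    (hΓ : ∀ j j', j' ∈ Γ j ↔ j' ≠ j ∧ (vbl j ∩ vbl j').Nonempty)
    (x : Fin m → ℝ) (hx : ∀ j, x j ∈ Set.Ioo (0 : ℝ) 1)
    (hprob : ∀ j, (μ (A j)).toReal ≤ x j * ∏ j' ∈ Γ j, (1 - x j')) :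
    ENNReal.ofReal (∏ j, (1 - x j)) ≤ μ (⋂ j, (A j)ᶜ) ∧
      0 < ∏ j, (1 - x j) ∧ (⋂ j, (A j)ᶜ).Nonempty := by
  have hle i : MeasurableSpace.comap (P i) (mD i) ≤ ‹_› := (hPmeas i).comap_le
  have hAmeas j : MeasurableSet (A j) := iSup₂_le (fun i _ => hle i) _ (hA j)
  have hdisj j (S : Finset (Fin m)) (hj : j ∉ S) (hS : Disjoint S (Γ j)) :
      ∀ k ∈ S, Disjoint (vbl j) (vbl k) := fun k hk => by
    have : ¬ (vbl j ∩ vbl k).Nonempty := fun h =>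
      disjoint_left.1 hS hk ((hΓ j k).2 ⟨ne_of_mem_of_not_mem hk hj, h⟩)
    rwa [not_nonempty_iff_eq_empty, ← disjoint_iff_inter_eq_empty] at this
  have hgraph : IsLopsidedDependencyGraph μ A Γ := fun j S hj hS => by
    simp [measureReal_def, measure_inter_biInter_compl_eq_mul_of_disjoint hle hindep.iIndep hA
      (hdisj j S hj hS)]
  have hbound : ∏ j, (1 - x j) ≤ μ.real (⋂ j, (A j)ᶜ) :=
    prod_one_sub_le_measureReal_iInter_compl hAmeas (fun j => Set.Ioo_subset_Icc_self (hx j))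
      hgraph hprob
  have hpos : 0 < ∏ j, (1 - x j) := prod_pos fun j _ => sub_pos.2 (hx j).2
  have hmeasure := ENNReal.ofReal_le_of_le_toReal hbound
  exact ⟨hmeasure, hpos,
    nonempty_of_measure_ne_zero ((ENNReal.ofReal_pos.2 hpos).trans_le hmeasure).ne'⟩

/-- **Lovász Local Lemma (general, variable framework).**
Mutually independent discrete random variables `P i : Ω → D i`, events `A j` each
measurable w.r.t. the σ-algebra generated by the variables indexed by `vbl j`,
dependency neighborhoods `Γ j = {j' ≠ j : vbl j ∩ vbl j' ≠ ∅}`.  If there is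
`x : Fin m → (0,1)` with `Pr[A j] ≤ x j * ∏_{j' ∈ Γ j} (1 - x j')` for all `j`,
then `Pr[⋂ j, (A j)ᶜ] ≥ ∏ j (1 - x j) > 0`; in particular some outcome avoids
all the events. -/
theorem lll_general_variable_framework
    {Ω : Type*} [MeasurableSpace Ω] (μ : Measure Ω) [IsProbabilityMeasure μ]
    {n m : ℕ} (D : Fin n → Type*) [∀ i, Fintype (D i)] [∀ i, Nonempty (D i)]
    [mD : ∀ i, MeasurableSpace (D i)]
    (P : ∀ i, Ω → D i) (hPmeas : ∀ i, Measurable (P i))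
    (hindep : iIndepFun (m := mD) P μ)
    (A : Fin m → Set Ω) (vbl : Fin m → Finset (Fin n))
    (hA : ∀ j, MeasurableSet[⨆ i ∈ vbl j, MeasurableSpace.comap (P i) (mD i)] (A j))
    (Γ : Fin m → Finset (Fin m))
    (hΓ : ∀ j j', j' ∈ Γ j ↔ j' ≠ j ∧ (vbl j ∩ vbl j').Nonempty)
    (x : Fin m → ℝ) (hx : ∀ j, x j ∈ Set.Ioo (0 : ℝ) 1)
    (hprob : ∀ j, (μ (A j)).toReal ≤ x j * ∏ j' ∈ Γ j, (1 - x j')) :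
    ENNReal.ofReal (∏ j, (1 - x j)) ≤ μ (⋂ j, (A j)ᶜ) ∧
      0 < ∏ j, (1 - x j) ∧ (⋂ j, (A j)ᶜ).Nonempty :=
  lll_general_variable_framework_general μ D (mD := mD) P hPmeas hindep A vbl hA Γ hΓ x hx hprob
end

section
/- Let P_1,…,P_n be mutually independent random variables on a probability space Ω, with P_i taking values in a finite nonempty set D_i. Let A_1,…,A_m be events such that each A_j is measurable with respect to the σ-algebra generated by the variables {P_i : i ∈ vbl(j)} for some set vbl(j) ⊆ {1,…,n}, and define Γ(j) = {j' ≠ j : vbl(j) ∩ vbl(j') ≠ ∅}. Suppose there are a real p ∈ [0,1] and a natural number d such that Pr[A_j] ≤ p and |Γ(j)| ≤ d for every j, and e·p·(d+1) ≤ 1 (where e is Euler's number). Then Pr[⋂_{j=1}^m A_jᶜ] > 0; in particular the set of outcomes at which none of the events A_1,…,A_m happens is nonempty. -/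
/-!
Write `N_S = ⋂_{k ∈ S} A_kᶜ` (`avoid A S` below) and `N = N_{all events}`. Pick `x < 1` with
`p ≤ x (1 - x)^d`; `e p (d + 1) ≤ 1` allows `x = 1/(d + 1)`, because `(1 - 1/(d+1))^d ≥ 1/e`.
By strong induction on `S`, `Pr[A_j ∩ N_S] ≤ x Pr[N_S]` whenever `j ∉ S`: removing the
neighbours of `j` from `S` costs at most a factor `(1 - x)^d` in `Pr[N_S]` (one factor
`1 - x` per neighbour, by the induction hypothesis), and on the remaining events `A_j` is
independent, so it has conditional probability at most `p`. Chaining the same bound over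
all events gives `Pr[N] ≥ (1 - x)^m > 0`.
-/

open MeasureTheory ProbabilityTheory Finset

namespace LovaszLocalLemma

variable {Ω ι : Type*}

def avoid (A : ι → Set Ω) (S : Finset ι) : Set Ω := ⋂ k ∈ S, (A k)ᶜ

lemma avoid_antitone (A : ι → Set Ω) : Antitone (avoid A) := fun _ _ hST =>
  Set.biInter_subset_biInter_left (Finset.coe_subset.2 hST)

lemma avoid_empty (A : ι → Set Ω) : avoid A ∅ = Set.univ := by simp [avoid]

lemma avoid_univ [Fintype ι] (A : ι → Set Ω) : avoid A univ = ⋂ j, (A j)ᶜ := by simp [avoid]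

lemma avoid_insert [DecidableEq ι] (A : ι → Set Ω) (k : ι) (S : Finset ι) :
    avoid A (insert k S) = avoid A S \ A k := by
  rw [avoid, set_biInter_insert, Set.sdiff_eq, Set.inter_comm, avoid]

variable [MeasurableSpace Ω] {μ : Measure Ω} {A : ι → Set Ω}

lemma measureReal_avoid_insert [IsFiniteMeasure μ] [DecidableEq ι] {k : ι}
    (hA : MeasurableSet (A k)) (S : Finset ι) :
    μ.real (avoid A (insert k S)) = μ.real (avoid A S) - μ.real (A k ∩ avoid A S) := by
  rw [avoid_insert, Set.inter_comm, eq_sub_iff_add_eq, add_comm]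
  exact measureReal_inter_add_sdiff hA

lemma one_sub_pow_mul_le_measureReal_avoid_union [IsFiniteMeasure μ] [DecidableEq ι]
    (hA : ∀ j, MeasurableSet (A j)) {x : ℝ} (hx : x ≤ 1) (U T : Finset ι)
    (hbound : ∀ a ∈ T, ∀ R ⊆ T, a ∉ R →
      μ.real (A a ∩ avoid A (U ∪ R)) ≤ x * μ.real (avoid A (U ∪ R))) :
    (1 - x) ^ #T * μ.real (avoid A U) ≤ μ.real (avoid A (U ∪ T)) := by
  induction T using Finset.induction_on with
  | empty => simp
  | @insert a T ha ih =>
    have ih' := ih fun b hb R hR =>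
      hbound b (mem_insert_of_mem hb) R (hR.trans (subset_insert a T))
    have ha' := hbound a (mem_insert_self a T) T (subset_insert a T) ha
    rw [card_insert_of_notMem ha, union_insert, measureReal_avoid_insert (hA a), pow_succ,
      mul_comm _ (1 - x), mul_assoc]
    linarith [mul_le_mul_of_nonneg_left ih' (sub_nonneg.2 hx)]

lemma measureReal_inter_avoid_le [IsFiniteMeasure μ]
    (hA : ∀ j, MeasurableSet (A j)) {Γ : ι → Finset ι} {p x : ℝ} {d : ℕ}
    (hx₀ : 0 ≤ x) (hx₁ : x ≤ 1) (hpx : p ≤ x * (1 - x) ^ d)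
    (hprob : ∀ j, μ.real (A j) ≤ p) (hdeg : ∀ j, #(Γ j) ≤ d)
    (hindep : ∀ j S, j ∉ S → Disjoint S (Γ j) →
      μ (A j ∩ avoid A S) = μ (A j) * μ (avoid A S))
    (S : Finset ι) {j : ι} (hj : j ∉ S) :
    μ.real (A j ∩ avoid A S) ≤ x * μ.real (avoid A S) := by
  classical
  induction S using Finset.strongInduction generalizing j with
  | H S ih =>
    set far := S \ Γ j
    set near := S ∩ Γ j
    have hnear : (1 - x) ^ d * μ.real (avoid A far) ≤ μ.real (avoid A S) := calc
      (1 - x) ^ d * μ.real (avoid A far) ≤ (1 - x) ^ #near * μ.real (avoid A far) := by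
        refine mul_le_mul_of_nonneg_right (pow_le_pow_of_le_one (by linarith) (by linarith) ?_)
          measureReal_nonneg
        exact (card_le_card inter_subset_right).trans (hdeg j)
      _ ≤ μ.real (avoid A (far ∪ near)) := by
        refine one_sub_pow_mul_le_measureReal_avoid_union hA hx₁ far near fun a ha R hR haR => ?_
        have haS : a ∈ S := mem_of_mem_inter_left ha
        have ha_far : a ∉ far := fun h => (mem_sdiff.1 h).2 (mem_of_mem_inter_right ha)
        refine ih _ ⟨union_subset sdiff_subset (hR.trans inter_subset_left), fun h => ?_⟩ ?_
        · exact (mem_union.1 (h haS)).elim ha_far haR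
        · exact fun h => (mem_union.1 h).elim ha_far haR
      _ = μ.real (avoid A S) := by rw [sdiff_union_inter]
    have hfar : μ.real (A j ∩ avoid A S) ≤ p * μ.real (avoid A far) := calc
      μ.real (A j ∩ avoid A S) ≤ μ.real (A j ∩ avoid A far) :=
        measureReal_mono (Set.inter_subset_inter_right _ (avoid_antitone A sdiff_subset))
      _ = μ.real (A j) * μ.real (avoid A far) := by
        rw [measureReal_def, hindep j far (fun h => hj (sdiff_subset h)) sdiff_disjoint,
          ENNReal.toReal_mul, measureReal_def, measureReal_def]
      _ ≤ p * μ.real (avoid A far) := by gcongr; exact hprob j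
    calc μ.real (A j ∩ avoid A S) ≤ p * μ.real (avoid A far) := hfar
      _ ≤ x * ((1 - x) ^ d * μ.real (avoid A far)) := by
        rw [← mul_assoc]; gcongr
      _ ≤ x * μ.real (avoid A S) := by gcongr

theorem measure_iInter_compl_pos [IsProbabilityMeasure μ] [Fintype ι]
    (hA : ∀ j, MeasurableSet (A j)) {Γ : ι → Finset ι} {p x : ℝ} {d : ℕ}
    (hx₀ : 0 ≤ x) (hx₁ : x < 1) (hpx : p ≤ x * (1 - x) ^ d)
    (hprob : ∀ j, μ.real (A j) ≤ p) (hdeg : ∀ j, #(Γ j) ≤ d)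
    (hindep : ∀ j S, j ∉ S → Disjoint S (Γ j) →
      μ (A j ∩ avoid A S) = μ (A j) * μ (avoid A S)) :
    0 < μ (⋂ j, (A j)ᶜ) := by
  classical
  have h := one_sub_pow_mul_le_measureReal_avoid_union (μ := μ) hA hx₁.le ∅ univ
    fun a _ R _ haR => measureReal_inter_avoid_le hA hx₀ hx₁.le hpx hprob hdeg hindep _
      (by simpa using haR)
  rw [avoid_empty, probReal_univ, mul_one, empty_union, avoid_univ] at h
  exact (ENNReal.toReal_pos_iff.1 ((pow_pos (sub_pos.2 hx₁) _).trans_le h)).1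

lemma exp_neg_one_le_one_sub_inv_pow (d : ℕ) : Real.exp (-1) ≤ (1 - ((d : ℝ) + 1)⁻¹) ^ d := by
  rcases eq_or_ne d 0 with rfl | hd
  · simp
  have h : 1 - ((d : ℝ) + 1)⁻¹ = (1 + (d : ℝ)⁻¹)⁻¹ := by field_simp; ring
  rw [h, inv_pow, Real.exp_neg]
  exact inv_anti₀ (by positivity) Real.one_add_inv_pow_le_exp

lemma exists_le_mul_one_sub_pow_of_exp_mul_le_one {p : ℝ} {d : ℕ} (hp : 0 ≤ p)
    (h : Real.exp 1 * p * (d + 1) ≤ 1) : ∃ x, 0 ≤ x ∧ x < 1 ∧ p ≤ x * (1 - x) ^ d := by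
  rcases eq_or_ne d 0 with rfl | hd
  · refine ⟨p, hp, ?_, by simp⟩
    rw [Nat.cast_zero, zero_add, mul_one] at h
    nlinarith [Real.add_one_lt_exp one_ne_zero]
  refine ⟨((d : ℝ) + 1)⁻¹, by positivity, inv_lt_one_of_one_lt₀ ?_, ?_⟩
  · have : (1 : ℝ) ≤ d := Nat.one_le_cast.2 (Nat.one_le_iff_ne_zero.2 hd)
    linarith
  calc p ≤ ((d : ℝ) + 1)⁻¹ * Real.exp (-1) := by
        rw [le_inv_mul_iff₀ (by positivity), Real.exp_neg, ← one_div,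
          le_div_iff₀ (Real.exp_pos 1)]
        linarith
    _ ≤ _ := by gcongr; exact exp_neg_one_le_one_sub_inv_pow d

lemma measure_inter_avoid_eq_mul {κ : Type*} {β : κ → Type*} [mβ : ∀ i, MeasurableSpace (β i)]
    {X : ∀ i, Ω → β i} (hX : ∀ i, Measurable (X i)) (hindep : iIndepFun X μ)
    {vbl : ι → Finset κ} (hA : ∀ j, MeasurableSet[⨆ i ∈ vbl j, (mβ i).comap (X i)] (A j))
    {j : ι} {S : Finset ι} (hS : ∀ k ∈ S, Disjoint (vbl j) (vbl k)) :
    μ (A j ∩ avoid A S) = μ (A j) * μ (avoid A S) := by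
  classical
  have hdisj : Disjoint (vbl j : Set κ) (S.biUnion vbl : Set κ) :=
    disjoint_coe.2 ((disjoint_biUnion_right _ _ _).2 hS)
  have hle : ∀ k ∈ S, ⨆ i ∈ vbl k, (mβ i).comap (X i) ≤
      ⨆ i ∈ (S.biUnion vbl : Set κ), (mβ i).comap (X i) := fun k hk =>
    biSup_mono fun i hi => mem_biUnion.2 ⟨k, hk, hi⟩
  have hS_meas : MeasurableSet[⨆ i ∈ (S.biUnion vbl : Set κ), (mβ i).comap (X i)] (avoid A S) :=
    S.measurableSet_biInter fun k hk => (hle k hk _ (hA k)).compl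
  exact (Indep_iff _ _ μ).1 (indep_iSup_of_disjoint (fun i => (hX i).comap_le) hindep.iIndep hdisj)
    _ _ (hA j) hS_meas

end LovaszLocalLemma

open LovaszLocalLemma

theorem lll_symmetric_variable_framework_general
    {Ω : Type*} [MeasurableSpace Ω] (μ : Measure Ω) [IsProbabilityMeasure μ]
    {n m : ℕ} (D : Fin n → Type*)
    [mD : ∀ i, MeasurableSpace (D i)]
    (P : ∀ i, Ω → D i) (hPmeas : ∀ i, Measurable (P i))
    (hindep : iIndepFun (m := mD) P μ)
    (A : Fin m → Set Ω) (vbl : Fin m → Finset (Fin n))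
    (hA : ∀ j, MeasurableSet[⨆ i ∈ vbl j, MeasurableSpace.comap (P i) (mD i)] (A j))
    (Γ : Fin m → Finset (Fin m))
    (hΓ : ∀ j j', j' ∈ Γ j ↔ j' ≠ j ∧ (vbl j ∩ vbl j').Nonempty)
    (p : ℝ) (hp : p ∈ Set.Icc (0 : ℝ) 1) (d : ℕ)
    (hprob : ∀ j, (μ (A j)).toReal ≤ p)
    (hdeg : ∀ j, (Γ j).card ≤ d)
    (hepd : Real.exp 1 * p * (d + 1) ≤ 1) :
    0 < μ (⋂ j, (A j)ᶜ) ∧ (⋂ j, (A j)ᶜ).Nonempty := by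
  obtain ⟨x, hx₀, hx₁, hpx⟩ := exists_le_mul_one_sub_pow_of_exp_mul_le_one hp.1 hepd
  have hA_meas : ∀ j, MeasurableSet (A j) := fun j =>
    iSup₂_le (fun i _ => (hPmeas i).comap_le) _ (hA j)
  have hsep : ∀ j S, j ∉ S → Disjoint S (Γ j) → ∀ k ∈ S, Disjoint (vbl j) (vbl k) := by
    intro j S hj hS k hk
    have hkΓ : k ∉ Γ j := disjoint_left.1 hS hk
    rw [hΓ, not_and, not_nonempty_iff_eq_empty, ← disjoint_iff_inter_eq_empty] at hkΓ
    exact hkΓ (ne_of_mem_of_not_mem hk hj)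
  have hpos : 0 < μ (⋂ j, (A j)ᶜ) := measure_iInter_compl_pos hA_meas hx₀ hx₁ hpx hprob hdeg
    fun j S hj hS => measure_inter_avoid_eq_mul hPmeas hindep hA (hsep j S hj hS)
  exact ⟨hpos, nonempty_of_measure_ne_zero hpos.ne'⟩

/-- **Symmetric Lovász Local Lemma (variable framework).**
Mutually independent discrete random variables `P i : Ω → D i`, events `A j` each
measurable w.r.t. the σ-algebra generated by the variables indexed by `vbl j`,
dependency neighborhoods `Γ j = {j' ≠ j : vbl j ∩ vbl j' ≠ ∅}`.  If `Pr[A j] ≤ p`,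
`|Γ j| ≤ d` for all `j` and `e · p · (d+1) ≤ 1`, then with positive probability
none of the events happens; in particular some outcome avoids all the events. -/
theorem lll_symmetric_variable_framework
    {Ω : Type*} [MeasurableSpace Ω] (μ : Measure Ω) [IsProbabilityMeasure μ]
    {n m : ℕ} (D : Fin n → Type*) [∀ i, Fintype (D i)] [∀ i, Nonempty (D i)]
    [mD : ∀ i, MeasurableSpace (D i)]
    (P : ∀ i, Ω → D i) (hPmeas : ∀ i, Measurable (P i))
    (hindep : iIndepFun (m := mD) P μ)
    (A : Fin m → Set Ω) (vbl : Fin m → Finset (Fin n))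
    (hA : ∀ j, MeasurableSet[⨆ i ∈ vbl j, MeasurableSpace.comap (P i) (mD i)] (A j))
    (Γ : Fin m → Finset (Fin m))
    (hΓ : ∀ j j', j' ∈ Γ j ↔ j' ≠ j ∧ (vbl j ∩ vbl j').Nonempty)
    (p : ℝ) (hp : p ∈ Set.Icc (0 : ℝ) 1) (d : ℕ)
    (hprob : ∀ j, (μ (A j)).toReal ≤ p)
    (hdeg : ∀ j, (Γ j).card ≤ d)
    (hepd : Real.exp 1 * p * (d + 1) ≤ 1) :
    0 < μ (⋂ j, (A j)ᶜ) ∧ (⋂ j, (A j)ᶜ).Nonempty :=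
  lll_symmetric_variable_framework_general μ D (mD := mD) P hPmeas hindep A vbl hA Γ hΓ p hp d hprob
    hdeg hepd
end

section
/- Let F be a k-CNF formula with finitely many clauses, where k ≥ 1 and every clause is a disjunction of literals over exactly k distinct Boolean variables. If every clause of F shares a variable with at most 2^k/e − 1 other clauses of F (where e is Euler's number), then F has a satisfying assignment. -/
/-!
Under a uniformly random assignment of the finitely many variables that occur, the assignments
falsifying a clause on `k` variables have probability at most `2⁻ᵏ`, and this event is mutually
independent of the events of the clauses sharing no variable with it. The Lovász Local Lemma
with the uniform weight `x = e 2⁻ᵏ` applies: a clause with `d ≤ 2ᵏ/e - 1` neighbours has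
`(d + 1) x ≤ 1`, so `(1 - x)ᵈ ≥ e⁻¹` and `2⁻ᵏ = x e⁻¹ ≤ x (1 - x)ᵈ`.

The local lemma is proved in counting form on a finite sample space, by the usual induction
`P(B a | ⋂_{b ∈ S} (B b)ᶜ) ≤ x a`: splitting `S` into the neighbours `N` of `a` and the rest
`M`, independence bounds the numerator by `P(B a) P(⋂_M)`, and peeling off the events of `N`
one at a time bounds the denominator below by `∏_N (1 - x) P(⋂_M)`.
-/

open Finset Real

section LocalLemma

variable {Ω α : Type*} [Fintype Ω] [DecidableEq Ω]

def avoiding (B : α → Finset Ω) (S : Finset α) : Finset Ω :=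
  univ.filter fun ω => ∀ a ∈ S, ω ∉ B a

variable {B : α → Finset Ω}

@[simp]
lemma mem_avoiding {S : Finset α} {ω : Ω} : ω ∈ avoiding B S ↔ ∀ a ∈ S, ω ∉ B a := by
  simp [avoiding]

@[simp]
lemma avoiding_empty : avoiding B ∅ = univ := by
  ext; simp

lemma avoiding_anti {S T : Finset α} (h : S ⊆ T) : avoiding B T ⊆ avoiding B S :=
  fun _ hω => mem_avoiding.2 fun a ha => mem_avoiding.1 hω a (h ha)

variable [DecidableEq α]

lemma card_avoiding_insert (a : α) (S : Finset α) :
    #(avoiding B (insert a S)) + #(avoiding B S ∩ B a) = #(avoiding B S) := by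
  have : avoiding B (insert a S) = avoiding B S \ B a := by
    ext; simp [and_comm]
  rw [this, card_sdiff_add_card_inter]

lemma prod_one_sub_mul_card_avoiding_le {x : α → ℝ} {N M : Finset α}
    (hx : ∀ a ∈ N, x a ≤ 1) (hNM : Disjoint N M)
    (hcond : ∀ a ∈ N, ∀ R ⊆ N ∪ M, a ∉ R →
      (#(avoiding B R ∩ B a) : ℝ) ≤ x a * #(avoiding B R)) :
    (∏ a ∈ N, (1 - x a)) * #(avoiding B M) ≤ #(avoiding B (N ∪ M)) := by
  induction N using Finset.induction_on with
  | empty => simp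
  | insert a N haN ih =>
    have hNM' : N ∪ M ⊆ insert a N ∪ M := union_subset_union (subset_insert a N) le_rfl
    have haNM : a ∉ N ∪ M := by
      simp [haN, disjoint_left.1 hNM (mem_insert_self a N)]
    have ih' := ih (fun b hb => hx b (mem_insert_of_mem hb))
      (disjoint_of_subset_left (subset_insert a N) hNM)
      fun b hb R hR => hcond b (mem_insert_of_mem hb) R (hR.trans hNM')
    have hpeel := hcond a (mem_insert_self a N) (N ∪ M) hNM' haNM
    have hcard : (#(avoiding B (insert a (N ∪ M))) : ℝ) + #(avoiding B (N ∪ M) ∩ B a)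
        = #(avoiding B (N ∪ M)) := by exact_mod_cast card_avoiding_insert a (N ∪ M)
    have hxa : 0 ≤ 1 - x a := sub_nonneg.2 (hx a (mem_insert_self a N))
    rw [prod_insert haN, insert_union, mul_assoc]
    calc (1 - x a) * ((∏ b ∈ N, (1 - x b)) * #(avoiding B M))
        ≤ (1 - x a) * #(avoiding B (N ∪ M)) := mul_le_mul_of_nonneg_left ih' hxa
      _ ≤ #(avoiding B (insert a (N ∪ M))) := by linarith

variable [Nonempty Ω] {dep : α → α → Prop} [DecidableRel dep] {F : Finset α}
  {x : α → ℝ}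

-- For the uniform measure on `Ω`, `#X * card Ω ≤ #Y * #Z` reads `P(X) ≤ P(Y) P(Z)`.
lemma card_avoiding_inter_le (hx0 : ∀ a ∈ F, 0 ≤ x a) (hx1 : ∀ a ∈ F, x a ≤ 1)
    (hindep : ∀ a ∈ F, ∀ M ⊆ F, a ∉ M → (∀ b ∈ M, ¬ dep a b) →
      #(avoiding B M ∩ B a) * Fintype.card Ω ≤ #(avoiding B M) * #(B a))
    (hbound : ∀ a ∈ F, (#(B a) : ℝ) ≤
      x a * (∏ b ∈ F.filter (fun b => b ≠ a ∧ dep a b), (1 - x b)) * Fintype.card Ω)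
    {S : Finset α} (hS : S ⊆ F) {a : α} (ha : a ∈ F) (haS : a ∉ S) :
    (#(avoiding B S ∩ B a) : ℝ) ≤ x a * #(avoiding B S) := by
  induction S using Finset.strongInduction generalizing a with
  | H S ih =>
  set N := S.filter (dep a)
  set M := S.filter (fun b => ¬ dep a b)
  set nbrs := F.filter (fun b => b ≠ a ∧ dep a b)
  have hNM : N ∪ M = S := filter_union_filter_not_eq _ _
  have hpeel : (∏ b ∈ N, (1 - x b)) * #(avoiding B M) ≤ #(avoiding B S) := by
    refine hNM ▸ prod_one_sub_mul_card_avoiding_le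
      (fun b hb => hx1 b (hS (mem_filter.1 hb).1)) (disjoint_filter_filter_not _ _ _)
      fun b hb R hR hbR => ?_
    have hb : b ∈ S := (mem_filter.1 hb).1
    exact ih R ((ssubset_iff_of_subset (hNM ▸ hR)).2 ⟨b, hb, hbR⟩)
      ((hNM ▸ hR).trans hS) (hS hb) hbR
  have hindep' :
      (#(avoiding B M ∩ B a) : ℝ) * Fintype.card Ω ≤ #(avoiding B M) * #(B a) := by
    exact_mod_cast hindep a ha M ((filter_subset _ _).trans hS)
      (fun h => haS (mem_filter.1 h).1) fun b hb => (mem_filter.1 hb).2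
  have hneighbours : ∏ b ∈ nbrs, (1 - x b) ≤ ∏ b ∈ N, (1 - x b) := by
    refine prod_le_prod_of_subset_of_le_one (fun b hb => ?_)
      (fun b hb => sub_nonneg.2 (hx1 b (mem_filter.1 hb).1))
      fun b hb _ => sub_le_self _ (hx0 b (mem_filter.1 hb).1)
    obtain ⟨hbS, hab⟩ := mem_filter.1 hb
    exact mem_filter.2 ⟨hS hbS, fun h => haS (h ▸ hbS), hab⟩
  have hΩ : (0 : ℝ) < Fintype.card Ω := by exact_mod_cast Fintype.card_pos
  calc (#(avoiding B S ∩ B a) : ℝ)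
      ≤ #(avoiding B M ∩ B a) := by
        exact_mod_cast card_le_card
          (inter_subset_inter_right (avoiding_anti (filter_subset _ _)))
    _ ≤ x a * (∏ b ∈ nbrs, (1 - x b)) * #(avoiding B M) := by
        rw [← mul_le_mul_iff_left₀ hΩ]
        calc _ ≤ (#(avoiding B M) : ℝ) * #(B a) := hindep'
          _ ≤ #(avoiding B M) * (x a * (∏ b ∈ nbrs, (1 - x b)) * Fintype.card Ω) :=
              mul_le_mul_of_nonneg_left (hbound a ha) (by positivity)
          _ = _ := by ring
    _ ≤ x a * (∏ b ∈ N, (1 - x b)) * #(avoiding B M) := by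
        gcongr; exact hx0 a ha
    _ ≤ x a * #(avoiding B S) := by
        rw [mul_assoc]
        exact mul_le_mul_of_nonneg_left hpeel (hx0 a ha)

theorem avoiding_nonempty_of_card_le (hx0 : ∀ a ∈ F, 0 ≤ x a) (hx1 : ∀ a ∈ F, x a < 1)
    (hindep : ∀ a ∈ F, ∀ M ⊆ F, a ∉ M → (∀ b ∈ M, ¬ dep a b) →
      #(avoiding B M ∩ B a) * Fintype.card Ω ≤ #(avoiding B M) * #(B a))
    (hbound : ∀ a ∈ F, (#(B a) : ℝ) ≤
      x a * (∏ b ∈ F.filter (fun b => b ≠ a ∧ dep a b), (1 - x b)) * Fintype.card Ω) :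
    (avoiding B F).Nonempty := by
  have h := prod_one_sub_mul_card_avoiding_le (M := ∅) (fun a ha => (hx1 a ha).le)
    (disjoint_empty_right F) fun a ha R hR haR =>
      card_avoiding_inter_le hx0 (fun b hb => (hx1 b hb).le) hindep hbound
        (by simpa using hR) ha haR
  rw [avoiding_empty, union_empty, card_univ] at h
  have hpos : 0 < (∏ a ∈ F, (1 - x a)) * Fintype.card Ω :=
    mul_pos (prod_pos fun a ha => sub_pos.2 (hx1 a ha)) (by exact_mod_cast Fintype.card_pos)
  exact card_pos.1 (by exact_mod_cast hpos.trans_le h)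

end LocalLemma

section SymmetricLocalLemma

lemma exp_neg_one_le_one_sub_pow {x : ℝ} (hx : x < 1) {n : ℕ} (h : (n + 1) * x ≤ 1) :
    exp (-1) ≤ (1 - x) ^ n := by
  have hpos : 0 < 1 - x := sub_pos.2 hx
  have hstep : exp (-(x / (1 - x))) ≤ 1 - x := by
    rw [exp_neg, inv_le_comm₀ (exp_pos _) hpos]
    calc (1 - x)⁻¹ = x / (1 - x) + 1 := by field_simp; ring
      _ ≤ exp (x / (1 - x)) := add_one_le_exp _
  have hn : n * (x / (1 - x)) ≤ 1 := by
    rw [mul_div_assoc', div_le_one hpos]; linarith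
  calc exp (-1) ≤ exp (-(x / (1 - x))) ^ n := by
        rw [← exp_nat_mul]; exact exp_le_exp.2 (by linarith)
    _ ≤ (1 - x) ^ n := pow_le_pow_left₀ (exp_pos _).le hstep n

variable {Ω α : Type*} [Fintype Ω] [DecidableEq Ω] [Nonempty Ω] [DecidableEq α]
  {B : α → Finset Ω} {dep : α → α → Prop} [DecidableRel dep] {F : Finset α}

theorem avoiding_nonempty_of_exp_mul_le {p : ℝ} (hp0 : 0 ≤ p) (hp1 : exp 1 * p < 1)
    (hB : ∀ a ∈ F, (#(B a) : ℝ) ≤ p * Fintype.card Ω)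
    (hdeg : ∀ a ∈ F, (#(F.filter fun b => b ≠ a ∧ dep a b) + 1) * (exp 1 * p) ≤ 1)
    (hindep : ∀ a ∈ F, ∀ M ⊆ F, a ∉ M → (∀ b ∈ M, ¬ dep a b) →
      #(avoiding B M ∩ B a) * Fintype.card Ω ≤ #(avoiding B M) * #(B a)) :
    (avoiding B F).Nonempty := by
  refine avoiding_nonempty_of_card_le (x := fun _ => exp 1 * p) (fun _ _ => by positivity)
    (fun _ _ => hp1) hindep fun a ha => ?_
  rw [prod_const]
  calc (#(B a) : ℝ) ≤ p * Fintype.card Ω := hB a ha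
    _ = exp 1 * p * exp (-1) * Fintype.card Ω := by rw [exp_neg]; field_simp
    _ ≤ _ := by
        gcongr
        exact exp_neg_one_le_one_sub_pow hp1 (hdeg a ha)

end SymmetricLocalLemma

section ProductSpace

variable {ι β : Type*} [Fintype ι] [DecidableEq ι] [Fintype β]

lemma card_mul_card_pow_le_of_eqOn {T : Finset (ι → β)} {W : Finset ι}
    (hT : ∀ σ ∈ T, ∀ τ ∈ T, ∀ i ∈ W, σ i = τ i) :
    #T * Fintype.card β ^ #W ≤ Fintype.card (ι → β) := by
  rw [← Fintype.card_coe W, ← Fintype.card_fun, ← card_univ, ← card_product, ← card_univ]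
  -- an element of `T` is determined by its values off `W`, so it can be overwritten on `W`
  refine card_le_card_of_injOn (fun p i => if h : i ∈ W then p.2 ⟨i, h⟩ else p.1 i)
    (fun _ _ => mem_coe.2 (mem_univ _)) fun p hp q hq hpq => ?_
  obtain ⟨hp1, -⟩ := mem_product.1 hp
  obtain ⟨hq1, -⟩ := mem_product.1 hq
  refine Prod.ext (funext fun i => ?_) (funext fun i => ?_)
  · by_cases hi : i ∈ W
    · exact hT _ hp1 _ hq1 i hi
    · simpa [hi] using congrFun hpq i
  · simpa using congrFun hpq i

variable [DecidableEq β]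

lemma card_inter_mul_card_eq_of_dependsOn {T S : Finset (ι → β)} {W U : Finset ι}
    (hWU : Disjoint W U) (hT : DependsOn (· ∈ T) (W : Set ι))
    (hS : DependsOn (· ∈ S) (U : Set ι)) :
    #(T ∩ S) * Fintype.card (ι → β) = #T * #S := by
  have hUW : ∀ i ∈ U, i ∉ W := fun i hi hiW => disjoint_left.1 hWU hiW hi
  -- exchanging the coordinates in `W` maps `T ×ˢ S` onto `(T ∩ S) ×ˢ univ` and back
  let swap : (ι → β) × (ι → β) → (ι → β) × (ι → β) :=
    fun p => (W.piecewise p.1 p.2, W.piecewise p.2 p.1)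
  have hswap : ∀ p, swap (swap p) = p := fun p => by
    ext i <;> by_cases hi : i ∈ W <;> simp [swap, hi]
  rw [← card_univ, ← card_product, ← card_product]
  refine card_nbij' swap swap (fun p hp => ?_) (fun p hp => ?_) (fun p _ => hswap p)
    fun p _ => hswap p
  · obtain ⟨hT', hS'⟩ := mem_inter.1 (mem_product.1 hp).1
    refine mem_product.2 ⟨(hT fun i hi => ?_).mp hT', (hS fun i hi => ?_).mp hS'⟩
    · simp [swap, show i ∈ W from hi]
    · simp [swap, hUW i hi]
  · obtain ⟨hT', hS'⟩ := mem_product.1 hp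
    refine mem_product.2
      ⟨mem_inter.2 ⟨(hT fun i hi => ?_).mp hT', (hS fun i hi => ?_).mp hS'⟩, mem_univ _⟩
    · simp [swap, show i ∈ W from hi]
    · simp [swap, hUW i hi]

lemma dependsOn_mem_avoiding {α : Type*} {B : α → Finset (ι → β)} {W : α → Finset ι}
    {M : Finset α} (hB : ∀ b ∈ M, DependsOn (· ∈ B b) (W b : Set ι)) :
    DependsOn (· ∈ avoiding B M) (M.biUnion W : Set ι) := fun σ τ h => by
  simp only [mem_avoiding, eq_iff_iff]
  refine forall₂_congr fun b hb => not_congr (eq_iff_iff.1 (hB b hb fun i hi => h i ?_))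
  simpa using ⟨b, hb, hi⟩

end ProductSpace

section Clauses

variable {V : Type*} [DecidableEq V] (s : Finset V)

def extendByFalse (σ : s → Bool) (v : V) : Bool :=
  if h : v ∈ s then σ ⟨v, h⟩ else false

def falsifying (C : Finset (V × Bool)) : Finset (s → Bool) :=
  univ.filter fun σ => ∀ l ∈ C, extendByFalse s σ l.1 ≠ l.2

def clauseVars (C : Finset (V × Bool)) : Finset s :=
  (C.image Prod.fst).subtype (· ∈ s)

variable {s} {C : Finset (V × Bool)}

lemma dependsOn_mem_falsifying (hC : C.image Prod.fst ⊆ s) :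
    DependsOn (· ∈ falsifying s C) (clauseVars s C : Set s) := fun σ τ h => by
  have hl : ∀ l ∈ C, extendByFalse s σ l.1 = extendByFalse s τ l.1 := fun l hl => by
    have hls : l.1 ∈ s := hC (mem_image_of_mem _ hl)
    simpa [extendByFalse, hls] using h ⟨l.1, hls⟩ (mem_subtype.2 (mem_image_of_mem _ hl))
  simp only [falsifying, mem_filter, mem_univ, true_and, eq_iff_iff]
  exact forall₂_congr fun l hlC => by rw [hl l hlC]

lemma card_falsifying_le (hC : C.image Prod.fst ⊆ s) :
    (#(falsifying s C) : ℝ) ≤ (2 ^ #(C.image Prod.fst))⁻¹ * Fintype.card (s → Bool) := by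
  have hvars : #(clauseVars s C) = #(C.image Prod.fst) := by
    rw [clauseVars, card_subtype, filter_true_of_mem hC]
  rw [le_inv_mul_iff₀ (by positivity), ← hvars, mul_comm]
  -- each variable of `C` takes the value opposite to its literal in a falsifying assignment
  have key : #(falsifying s C) * Fintype.card Bool ^ #(clauseVars s C)
      ≤ Fintype.card (s → Bool) := card_mul_card_pow_le_of_eqOn fun σ hσ τ hτ v hv => by
    obtain ⟨l, hl, hlv⟩ := mem_image.1 (mem_subtype.1 hv)
    have hσv := (mem_filter.1 hσ).2 l hl
    have hτv := (mem_filter.1 hτ).2 l hl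
    simp only [extendByFalse, hlv, v.2, dif_pos] at hσv hτv
    exact (Bool.eq_not_of_ne hσv).trans (Bool.eq_not_of_ne hτv).symm
  rw [Fintype.card_bool] at key
  exact_mod_cast key

lemma disjoint_clauseVars {C' : Finset (V × Bool)}
    (h : ¬ (C.image Prod.fst ∩ C'.image Prod.fst).Nonempty) :
    Disjoint (clauseVars s C) (clauseVars s C') := by
  rw [← not_disjoint_iff_nonempty_inter, not_not] at h
  exact disjoint_left.2 fun v hv hv' =>
    disjoint_left.1 h (mem_subtype.1 hv) (mem_subtype.1 hv')

lemma card_avoiding_falsifying_inter_mul_le {M : Finset (Finset (V × Bool))}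
    (hC : C.image Prod.fst ⊆ s) (hM : ∀ C' ∈ M, C'.image Prod.fst ⊆ s)
    (hCM : ∀ C' ∈ M, ¬ (C.image Prod.fst ∩ C'.image Prod.fst).Nonempty) :
    #(avoiding (falsifying s) M ∩ falsifying s C) * Fintype.card (s → Bool)
      ≤ #(avoiding (falsifying s) M) * #(falsifying s C) := by
  refine (card_inter_mul_card_eq_of_dependsOn ?_ (dependsOn_mem_avoiding fun C' hC' =>
    dependsOn_mem_falsifying (hM C' hC')) (dependsOn_mem_falsifying hC)).le
  exact (disjoint_biUnion_left _ _ _).2 fun C' hC' => (disjoint_clauseVars (hCM C' hC')).symm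

end Clauses

lemma exp_one_lt_two_pow {k : ℕ} (h : exp 1 ≤ 2 ^ k) : exp 1 < 2 ^ k := by
  have h2 : (2 : ℝ) ^ 1 < 2 ^ k := by linarith [exp_one_gt_d9]
  have hk : 2 ≤ k := by have := (pow_lt_pow_iff_right₀ one_lt_two).1 h2; omega
  calc exp 1 < 2 ^ 2 := by linarith [exp_one_lt_d9]
    _ ≤ 2 ^ k := pow_le_pow_right₀ one_le_two hk

theorem kCNF_LLL_satisfiable_general {V : Type*} [DecidableEq V] (k : ℕ)
    (F : Finset (Finset (V × Bool)))
    (hvars : ∀ C ∈ F, (C.image Prod.fst).card = k ∧ C.card = k)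
    (hdeg : ∀ C ∈ F,
      ((F.filter (fun C' => C' ≠ C ∧
          ((C.image Prod.fst) ∩ (C'.image Prod.fst)).Nonempty)).card : ℝ)
        ≤ 2 ^ k / Real.exp 1 - 1) :
    ∃ σ : V → Bool, ∀ C ∈ F, ∃ l ∈ C, σ l.1 = l.2 := by
  obtain rfl | ⟨C₀, hC₀⟩ := F.eq_empty_or_nonempty
  · exact ⟨fun _ => false, by simp⟩
  have hek : exp 1 * (2 ^ k)⁻¹ < 1 := by
    have := (Nat.cast_nonneg _).trans (hdeg C₀ hC₀)
    rw [sub_nonneg, one_le_div (exp_pos 1)] at this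
    rw [← div_eq_mul_inv, div_lt_one (by positivity)]
    exact exp_one_lt_two_pow this
  have hdegree : ∀ C ∈ F, (#(F.filter fun C' => C' ≠ C ∧
      (C.image Prod.fst ∩ C'.image Prod.fst).Nonempty) + 1) * (exp 1 * (2 ^ k)⁻¹) ≤ 1 := by
    intro C hC
    have := hdeg C hC
    rw [le_sub_iff_add_le, le_div_iff₀ (exp_pos 1)] at this
    rw [← mul_assoc, mul_inv_le_iff₀ (by positivity)]
    linarith
  set s := F.sup fun C => C.image Prod.fst
  have hs : ∀ C ∈ F, C.image Prod.fst ⊆ s := fun C hC =>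
    le_sup (f := fun C => C.image Prod.fst) hC
  obtain ⟨σ, hσ⟩ := avoiding_nonempty_of_exp_mul_le (B := falsifying s) (by positivity) hek
    (fun C hC => (hvars C hC).1 ▸ card_falsifying_le (hs C hC)) hdegree
    fun C hC M hM _ hCM => card_avoiding_falsifying_inter_mul_le (hs C hC)
      (fun C' hC' => hs C' (hM hC')) hCM
  refine ⟨extendByFalse s σ, fun C hC => ?_⟩
  simpa only [falsifying, mem_filter, mem_univ, true_and, not_forall, not_not, exists_prop]
    using mem_avoiding.1 hσ C hC

/-- **k-CNF consequence of the Lovász Local Lemma.**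
A clause is a finite set of literals `(v, b)` (variable `v` with sign `b`),
over exactly `k` distinct variables.  An assignment `σ : V → Bool` satisfies a
clause if some literal `(v, b)` in it has `σ v = b`.  If every clause of the
formula `F` shares a variable with at most `2^k / e - 1` other clauses of `F`,
then `F` has a satisfying assignment. -/
theorem kCNF_LLL_satisfiable {V : Type*} [DecidableEq V] (k : ℕ) (hk : 1 ≤ k)
    (F : Finset (Finset (V × Bool)))
    (hvars : ∀ C ∈ F, (C.image Prod.fst).card = k ∧ C.card = k)
    (hdeg : ∀ C ∈ F,
      ((F.filter (fun C' => C' ≠ C ∧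
          ((C.image Prod.fst) ∩ (C'.image Prod.fst)).Nonempty)).card : ℝ)
        ≤ 2 ^ k / Real.exp 1 - 1) :
    ∃ σ : V → Bool, ∀ C ∈ F, ∃ l ∈ C, σ l.1 = l.2 :=
  kCNF_LLL_satisfiable_general k F hvars hdeg
end

section
/- Let S = D_1 × … × D_n be a product of finite nonempty sets with D = max_i |D_i|, let 𝒫 be a product probability distribution on S (the coordinates are independent), and let f : S → {0,1} have decision tree complexity at most k. If 𝒴 is a probability distribution on S that is a (k,δ)-approximation of 𝒫 for some δ ≥ 0, then |E_{x∼𝒴}[f(x)] − E_{x∼𝒫}[f(x)]| ≤ D^k · δ. -/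
/-- A decision tree over the product space `∀ i : Fin n, D i`. -/
inductive DTree {n : ℕ} (D : Fin n → Type*) : Type _ where
  | leaf : Bool → DTree D
  | node : (i : Fin n) → (D i → DTree D) → DTree D

/-- Evaluation of a decision tree on an input. -/
def DTree.eval {n : ℕ} {D : Fin n → Type*} : DTree D → (∀ i, D i) → Bool
  | .leaf b, _ => b
  | .node i f, x => (f (x i)).eval x

/-- The decision tree has depth at most `k`. -/
def DTree.depthLE {n : ℕ} {D : Fin n → Type*} : DTree D → ℕ → Prop
  | .leaf _, _ => True
  | .node _ _, 0 => False
  | .node _ f, k + 1 => ∀ d, (f d).depthLE k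

/-- `f` has decision tree complexity at most `k`. -/
def DTComplexityLE {n : ℕ} (D : Fin n → Type*) (f : (∀ i, D i) → Bool) (k : ℕ) : Prop :=
  ∃ t : DTree D, t.depthLE k ∧ ∀ x, t.eval x = f x

theorem dtree_main {n : ℕ} {D : Fin n → Type*}
    [∀ i, Fintype (D i)] [∀ i, DecidableEq (D i)]
    (Dmax : ℕ) (hD1 : 1 ≤ Dmax) (hD : ∀ i, Fintype.card (D i) ≤ Dmax)
    (p : ∀ i, D i → ℝ) (Y : (∀ i, D i) → ℝ)
    (k : ℕ) (δ : ℝ) (hδ : 0 ≤ δ)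
    (happrox : ∀ I : Finset (Fin n), I.card ≤ k → ∀ v : ∀ i, D i,
      |∑ x ∈ Finset.univ.filter (fun x : ∀ i, D i => ∀ i ∈ I, x i = v i), ∏ i, p i (x i)
        - ∑ x ∈ Finset.univ.filter (fun x : ∀ i, D i => ∀ i ∈ I, x i = v i), Y x| ≤ δ) :
    ∀ (t : DTree D) (m : ℕ), t.depthLE m → ∀ (I : Finset (Fin n)) (v : ∀ i, D i),
      I.card + m ≤ k →
      |∑ x ∈ (Finset.univ.filter (fun x : ∀ i, D i => ∀ i ∈ I, x i = v i)).filter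
            (fun x => t.eval x = true), Y x
        - ∑ x ∈ (Finset.univ.filter (fun x : ∀ i, D i => ∀ i ∈ I, x i = v i)).filter
            (fun x => t.eval x = true), ∏ i, p i (x i)| ≤ (Dmax : ℝ) ^ m * δ := by
  intro t
  induction t with
  | leaf b =>
    intro m _ I v hIk
    cases b with
    | false =>
      simp [DTree.eval]
      positivity
    | true =>
      simp only [DTree.eval, Finset.filter_true]
      rw [abs_sub_comm]
      calc _ ≤ δ := happrox I (le_trans (Nat.le_add_right _ _) hIk) v
        _ ≤ (Dmax : ℝ) ^ m * δ := by
          nth_rewrite 1 [← one_mul δ]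
          apply mul_le_mul_of_nonneg_right _ hδ
          exact one_le_pow₀ (by exact_mod_cast hD1)
  | node i g IH =>
    intro m ht I v hIk
    match m, ht with
    | m + 1, ht =>
    by_cases hiI : i ∈ I
    · -- on the set, x i = v i, so eval node = eval (g (v i))
      have hset : ∀ W : (∀ i, D i) → ℝ,
          ∑ x ∈ (Finset.univ.filter (fun x : ∀ i, D i => ∀ j ∈ I, x j = v j)).filter
            (fun x => (DTree.node i g).eval x = true), W x
          = ∑ x ∈ (Finset.univ.filter (fun x : ∀ i, D i => ∀ j ∈ I, x j = v j)).filter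
            (fun x => (g (v i)).eval x = true), W x := by
        intro W
        congr 1
        apply Finset.filter_congr
        intro x hx
        simp only [Finset.mem_filter, Finset.mem_univ, true_and] at hx
        rw [show (DTree.node i g).eval x = (g (x i)).eval x from rfl, hx i hiI]
      rw [hset, hset]
      calc _ ≤ (Dmax : ℝ) ^ m * δ :=
            IH (v i) m (ht (v i)) I v (by omega)
        _ ≤ (Dmax : ℝ) ^ (m + 1) * δ := by
          apply mul_le_mul_of_nonneg_right _ hδ
          exact pow_le_pow_right₀ (by exact_mod_cast hD1) (Nat.le_succ m)
    · -- split the sum by value of x i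
      have hsplit : ∀ W : (∀ i, D i) → ℝ,
          ∑ x ∈ (Finset.univ.filter (fun x : ∀ i, D i => ∀ j ∈ I, x j = v j)).filter
            (fun x => (DTree.node i g).eval x = true), W x
          = ∑ d : D i, ∑ x ∈ (Finset.univ.filter
              (fun x : ∀ i, D i => ∀ j ∈ insert i I, x j = Function.update v i d j)).filter
              (fun x => (g d).eval x = true), W x := by
        intro W
        rw [← Finset.sum_fiberwise (s := (Finset.univ.filter
              (fun x : ∀ i, D i => ∀ j ∈ I, x j = v j)).filter
            (fun x => (DTree.node i g).eval x = true)) (g := fun x => x i) (f := W)]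
        apply Finset.sum_congr rfl
        intro d _
        congr 1
        ext x
        simp only [Finset.mem_filter, Finset.mem_univ, true_and, Finset.mem_insert]
        constructor
        · rintro ⟨⟨h1, h2⟩, h3⟩
          refine ⟨fun j hj => ?_, ?_⟩
          · rcases hj with rfl | hj
            · rw [h3, Function.update_self]
            · rw [Function.update_of_ne (fun h => hiI (by rw [← h]; exact hj)) _ _]
              exact h1 j hj
          · rw [show (DTree.node i g).eval x = (g (x i)).eval x from rfl, h3] at h2
            exact h2
        · rintro ⟨h1, h2⟩
          have hxi : x i = d := by
            have := h1 i (Or.inl rfl); rwa [Function.update_self] at this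
          refine ⟨⟨fun j hj => ?_, ?_⟩, hxi⟩
          · have := h1 j (Or.inr hj)
            rwa [Function.update_of_ne (fun h => hiI (by rw [← h]; exact hj)) _ _] at this
          · rw [show (DTree.node i g).eval x = (g (x i)).eval x from rfl, hxi]
            exact h2
      rw [hsplit, hsplit, ← Finset.sum_sub_distrib]
      calc _ ≤ ∑ d : D i, |∑ x ∈ (Finset.univ.filter
              (fun x : ∀ i, D i => ∀ j ∈ insert i I, x j = Function.update v i d j)).filter
              (fun x => (g d).eval x = true), Y x
            - ∑ x ∈ (Finset.univ.filter
              (fun x : ∀ i, D i => ∀ j ∈ insert i I, x j = Function.update v i d j)).filter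
              (fun x => (g d).eval x = true), ∏ i, p i (x i)| :=
          Finset.abs_sum_le_sum_abs _ _
        _ ≤ ∑ _d : D i, (Dmax : ℝ) ^ m * δ := by
          apply Finset.sum_le_sum
          intro d _
          apply IH d m (ht d) (insert i I) (Function.update v i d)
          rw [Finset.card_insert_of_notMem hiI]
          omega
        _ = (Fintype.card (D i) : ℝ) * ((Dmax : ℝ) ^ m * δ) := by
          rw [Finset.sum_const, Finset.card_univ, nsmul_eq_mul]
        _ ≤ (Dmax : ℝ) * ((Dmax : ℝ) ^ m * δ) := by
          apply mul_le_mul_of_nonneg_right _ (by positivity)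
          exact_mod_cast hD i
        _ = (Dmax : ℝ) ^ (m + 1) * δ := by ring

/-- **(k,δ)-approximations fool depth-k decision trees.**
`p i` are the marginals of a product distribution `𝒫` on `S = ∀ i, D i`
(so `𝒫 x = ∏ i, p i (x i)`), `Y` is a distribution on `S` which is a
`(k,δ)`-approximation of `𝒫` (all marginals on at most `k` coordinates agree
up to `δ`), and `f` has decision tree complexity at most `k`.  Then the
expectations of `f` under `Y` and under `𝒫` differ by at most `D^k · δ`,
where `D` bounds the sizes of the domains. -/
theorem kDelta_approx_fools_decision_trees {n : ℕ} (D : Fin n → Type*)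
    [∀ i, Fintype (D i)] [∀ i, Nonempty (D i)] [∀ i, DecidableEq (D i)]
    (Dmax : ℕ) (hD : ∀ i, Fintype.card (D i) ≤ Dmax)
    (p : ∀ i, D i → ℝ) (hp0 : ∀ i d, 0 ≤ p i d) (hp1 : ∀ i, ∑ d, p i d = 1)
    (Y : (∀ i, D i) → ℝ) (hY0 : ∀ x, 0 ≤ Y x) (hY1 : ∑ x, Y x = 1)
    (k : ℕ) (f : (∀ i, D i) → Bool) (hf : DTComplexityLE D f k)
    (δ : ℝ) (hδ : 0 ≤ δ)
    (happrox : ∀ I : Finset (Fin n), I.card ≤ k → ∀ v : ∀ i, D i,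
      |∑ x ∈ Finset.univ.filter (fun x : ∀ i, D i => ∀ i ∈ I, x i = v i), ∏ i, p i (x i)
        - ∑ x ∈ Finset.univ.filter (fun x : ∀ i, D i => ∀ i ∈ I, x i = v i), Y x| ≤ δ) :
    |∑ x ∈ Finset.univ.filter (fun x : ∀ i, D i => f x = true), Y x
      - ∑ x ∈ Finset.univ.filter (fun x : ∀ i, D i => f x = true), ∏ i, p i (x i)|
      ≤ (Dmax : ℝ) ^ k * δ := by
  obtain ⟨t, ht, heq⟩ := hf
  by_cases hn : n = 0
  · subst hn
    set x0 : ∀ i : Fin 0, D i := Classical.arbitrary _ with hx0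
    have huniv : (Finset.univ : Finset (∀ i : Fin 0, D i)) = {x0} := by
      ext x
      simp only [Finset.mem_univ, Finset.mem_singleton, true_iff]
      exact funext fun i => i.elim0
    rw [huniv] at hY1 ⊢
    rw [Finset.sum_singleton] at hY1
    by_cases hfx : f x0 = true
    · rw [Finset.filter_singleton, if_pos hfx, Finset.sum_singleton, Finset.sum_singleton, hY1]
      simp only [Finset.univ_eq_empty, Finset.prod_empty]
      simp only [sub_self, abs_zero]
      positivity
    · rw [Finset.filter_singleton, if_neg hfx]
      simp only [Finset.sum_empty, sub_self, abs_zero]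
      positivity
  · have hD1 : 1 ≤ Dmax :=
      le_trans (Fintype.card_pos (α := D ⟨0, Nat.pos_of_ne_zero hn⟩)) (hD _)
    have v : ∀ i, D i := Classical.arbitrary _
    have key := dtree_main Dmax hD1 hD p Y k δ hδ happrox t k ht ∅ v (by simp)
    simp only [Finset.notMem_empty, false_implies, implies_true, Finset.filter_true] at key
    have hfun : (fun x : ∀ i, D i => t.eval x = true) = fun x => f x = true :=
      funext fun x => by rw [heq]
    simp only [hfun] at key
    exact key
end

section
/- For all integers d ≥ 1 and u ≥ 1, the number of prefix-closed sets S of finite sequences over a d-element alphabet with |S| = u (equivalently, the number of subtrees with exactly u vertices of the infinite rooted d-ary tree that contain the root) is less than (e·d)^u, where e is Euler's number. -/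
/-!
Order the elements of a prefix-closed set `S` of size `u` lexicographically; every nonempty
word `p ++ [a]` then comes after its parent `p`. Recording each non-root word as the pair
(rank of `p`, `a`) gives a `(u - 1)`-subset of `Fin u × Fin d`, and `S` can be rebuilt from it
rank by rank, so there are at most `C(ud, u - 1) ≤ (ud)^(u-1)/(u-1)! = u^u/u! · d^(u-1)`
such sets. Finally `u^u/u! < e^u`, the `u`-th term of the exponential series.
-/

open Finset Real Nat

lemma Real.pow_div_factorial_lt_exp {x : ℝ} (hx : 0 < x) (n : ℕ) : x ^ n / n ! < exp x :=
  calc x ^ n / n ! < ∑ k ∈ range n, x ^ k / k ! + x ^ n / n ! + x ^ (n + 1) / (n + 1)! := by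
        have : 0 ≤ ∑ k ∈ range n, x ^ k / k ! := sum_nonneg fun k _ ↦ by positivity
        have : 0 < x ^ (n + 1) / (n + 1)! := by positivity
        linarith
    _ = ∑ k ∈ range (n + 2), x ^ k / k ! := by rw [sum_range_succ, sum_range_succ]
    _ ≤ exp x := sum_le_exp_of_nonneg hx.le _

lemma Nat.choose_mul_pred_lt_exp_mul_pow {d u : ℕ} (hd : 1 ≤ d) (hu : 1 ≤ u) :
    ((u * d).choose (u - 1) : ℝ) < (exp 1 * d) ^ u := by
  obtain ⟨n, rfl⟩ : ∃ n, u = n + 1 := ⟨u - 1, by omega⟩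
  rw [Nat.add_sub_cancel]
  calc ((((n + 1) * d).choose n : ℕ) : ℝ) ≤ (((n + 1) * d : ℕ) : ℝ) ^ n / n ! :=
        Nat.choose_le_pow_div _ _
    _ = ((n + 1 : ℕ) : ℝ) ^ (n + 1) / (n + 1)! * d ^ n := by
        push_cast [Nat.factorial_succ, mul_pow]
        field_simp
        ring
    _ < exp (n + 1 : ℕ) * d ^ n := by
        gcongr
        exact pow_div_factorial_lt_exp (by positivity) _
    _ ≤ exp (n + 1 : ℕ) * d ^ (n + 1) := by
        gcongr
        · exact_mod_cast hd
        · omega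
    _ = (exp 1 * d) ^ (n + 1) := by rw [mul_pow, exp_one_pow]

lemma List.lt_append_singleton {α : Type*} [LinearOrder α] (l : List α) (a : α) :
    l < l ++ [a] := by
  simpa using append_left_lt (l₁ := l) (nil_lt_cons a [])

def Finset.IsPrefixClosed {α : Type*} (S : Finset (List α)) : Prop :=
  ∀ l ∈ S, ∀ l' : List α, l' <+: l → l' ∈ S

lemma Finset.IsPrefixClosed.nil_mem {α : Type*} {S : Finset (List α)} (hS : S.IsPrefixClosed)
    (hne : S.Nonempty) : [] ∈ S :=
  hS _ hne.choose_spec [] List.nil_prefix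

namespace Finset

lemma exists_orderEmbOfFin_eq {β : Type*} [LinearOrder β] {S : Finset β} {u : ℕ}
    (h : S.card = u) {x : β} (hx : x ∈ S) : ∃ i, S.orderEmbOfFin h i = x := by
  rw [← Set.mem_range, range_orderEmbOfFin]
  exact hx

variable {α : Type*} [LinearOrder α] [Fintype α] {u : ℕ}

/-- The vertex `p ++ [a]` of `S` is recorded as the pair (rank of `p` in `S`, `a`). -/
noncomputable def parentCode (S : Finset (List α)) (h : S.card = u) : Finset (Fin u × α) :=
  {p | S.orderEmbOfFin h p.1 ++ [p.2] ∈ S}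

lemma mem_parentCode {S : Finset (List α)} {h : S.card = u} {p : Fin u × α} :
    p ∈ parentCode S h ↔ S.orderEmbOfFin h p.1 ++ [p.2] ∈ S := by
  simp [parentCode]

lemma image_parentCode {S : Finset (List α)} (hS : S.IsPrefixClosed) (h : S.card = u) :
    (parentCode S h).image (fun p ↦ S.orderEmbOfFin h p.1 ++ [p.2]) = S.erase [] := by
  ext x
  simp only [mem_image, mem_erase, mem_parentCode]
  constructor
  · rintro ⟨p, hp, rfl⟩
    exact ⟨by simp, hp⟩
  · rintro ⟨hx, hxS⟩
    obtain ⟨j, hj⟩ := exists_orderEmbOfFin_eq h (hS x hxS _ x.dropLast_prefix)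
    refine ⟨(j, x.getLast hx), ?_, ?_⟩ <;> simp only [hj, List.dropLast_append_getLast, hxS]

lemma card_parentCode {S : Finset (List α)} (hS : S.IsPrefixClosed) (h : S.card = u) :
    (parentCode S h).card = u - 1 := by
  have hinj : Function.Injective (fun p : Fin u × α ↦ S.orderEmbOfFin h p.1 ++ [p.2]) := by
    rintro ⟨i, a⟩ ⟨j, b⟩ hij
    obtain ⟨hij, hab⟩ := List.append_inj' hij rfl
    exact Prod.ext ((S.orderEmbOfFin h).injective hij) (List.singleton_inj.mp hab)
  rw [← card_image_of_injective _ hinj, image_parentCode hS h]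
  rcases S.eq_empty_or_nonempty with rfl | hne
  · simp [← h]
  · rw [card_erase_of_mem (hS.nil_mem hne), h]

lemma orderEmbOfFin_le_of_parentCode_eq {S T : Finset (List α)} (hS : S.IsPrefixClosed)
    (hT : T.IsPrefixClosed) (hSu : S.card = u) (hTu : T.card = u)
    (hcode : parentCode S hSu = parentCode T hTu) (i : Fin u)
    (hagree : ∀ j < i, S.orderEmbOfFin hSu j = T.orderEmbOfFin hTu j) :
    T.orderEmbOfFin hTu i ≤ S.orderEmbOfFin hSu i := by
  set s := S.orderEmbOfFin hSu
  set t := T.orderEmbOfFin hTu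
  suffices hmem : s i ∈ T by
    obtain ⟨k, hk⟩ := exists_orderEmbOfFin_eq hTu hmem
    have hik : i ≤ k := not_lt.mp fun hki ↦ hki.ne (s.injective ((hagree k hki).trans hk))
    exact hk ▸ t.monotone hik
  rcases (s i).eq_nil_or_concat' with hnil | ⟨p, a, hpa⟩
  · exact hnil ▸ hT.nil_mem ⟨t i, T.orderEmbOfFin_mem hTu i⟩
  have hsi : s i ∈ S := S.orderEmbOfFin_mem hSu i
  obtain ⟨j, rfl⟩ := exists_orderEmbOfFin_eq hSu (hS _ hsi p (hpa ▸ List.prefix_append p [a]))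
  have hji : j < i := s.lt_iff_lt.mp (hpa ▸ List.lt_append_singleton (s j) a)
  have hja : (j, a) ∈ parentCode T hTu := hcode ▸ mem_parentCode.mpr (hpa ▸ hsi)
  rw [hpa, hagree j hji]
  exact mem_parentCode.mp hja

lemma eq_of_parentCode_eq {S T : Finset (List α)} (hS : S.IsPrefixClosed)
    (hT : T.IsPrefixClosed) (hSu : S.card = u) (hTu : T.card = u)
    (hcode : parentCode S hSu = parentCode T hTu) : S = T := by
  have hst : ∀ i, S.orderEmbOfFin hSu i = T.orderEmbOfFin hTu i := by
    intro i
    induction i using WellFoundedLT.induction with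
    | _ i ih =>
      exact le_antisymm
        (orderEmbOfFin_le_of_parentCode_eq hT hS hTu hSu hcode.symm i fun j hj ↦ (ih j hj).symm)
        (orderEmbOfFin_le_of_parentCode_eq hS hT hSu hTu hcode i ih)
  rw [← coe_inj, ← range_orderEmbOfFin S hSu, ← range_orderEmbOfFin T hTu]
  exact congrArg Set.range (funext hst)

variable (α u) in
lemma parentCode_injective :
    Function.Injective fun S : {S : Finset (List α) // S.IsPrefixClosed ∧ S.card = u} ↦
      (⟨parentCode S.1 S.2.2, card_parentCode S.2.1 S.2.2⟩ :
        {C : Finset (Fin u × α) // C.card = u - 1}) :=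
  fun S T hST ↦
    Subtype.ext (eq_of_parentCode_eq S.2.1 T.2.1 S.2.2 T.2.2 (congrArg Subtype.val hST))

end Finset

/-- **Counting rooted trees of branching at most `d`.**
Prefix-closed sets of finite sequences over a `d`-element alphabet with exactly
`u` elements correspond to `u`-vertex subtrees of the infinite rooted `d`-ary
tree containing the root.  For `d ≥ 1` and `u ≥ 1` there are finitely many of
them, and their number is less than `(e·d)^u`. -/
theorem count_prefix_closed_sets_lt (d u : ℕ) (hd : 1 ≤ d) (hu : 1 ≤ u) :
    {S : Finset (List (Fin d)) | (∀ l ∈ S, ∀ l' : List (Fin d), l' <+: l → l' ∈ S) ∧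
        S.card = u}.Finite ∧
      (Nat.card {S : Finset (List (Fin d)) //
          (∀ l ∈ S, ∀ l' : List (Fin d), l' <+: l → l' ∈ S) ∧ S.card = u} : ℝ)
        < (Real.exp 1 * d) ^ u := by
  have hinj := parentCode_injective (Fin d) u
  refine ⟨Set.finite_coe_iff.mp (Finite.of_injective _ hinj), ?_⟩
  calc (Nat.card {S : Finset (List (Fin d)) //
          (∀ l ∈ S, ∀ l' : List (Fin d), l' <+: l → l' ∈ S) ∧ S.card = u} : ℝ)
      ≤ Nat.card {C : Finset (Fin u × Fin d) // C.card = u - 1} := by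
        exact_mod_cast Nat.card_le_card_of_injective _ hinj
    _ = (u * d).choose (u - 1) := by
        simp only [Nat.card_eq_fintype_card, Fintype.card_finset_len, Fintype.card_prod,
          Fintype.card_fin]
    _ < (Real.exp 1 * d) ^ u := Nat.choose_mul_pred_lt_exp_mul_pow hd hu
end

section
/- Let S = D_1 × … × D_n be a product of finite nonempty sets with D = max_i |D_i|, let 𝒫 be a product probability distribution on S, and let f_1, …, f_N : S → {0,1} be Boolean functions, each of decision tree complexity at most k, with ∑_{j=1}^N E_{x∼𝒫}[f_j(x)] ≤ 1/2. If 𝒴 is a probability distribution on S that is a (k,δ)-approximation of 𝒫 with N·D^k·δ < 1/2, then ∑_{j=1}^N E_{x∼𝒴}[f_j(x)] < 1; consequently there exists a point s ∈ S with 𝒴(s) > 0 and f_j(s) = 0 for every j. -/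
namespace DTree

variable {n : ℕ} {D : Fin n → Type*}

def trueLeafCount [∀ i, Fintype (D i)] : DTree D → ℕ
  | .leaf b => if b then 1 else 0
  | .node _ ch => ∑ d, (ch d).trueLeafCount

theorem trueLeafCount_le_pow [∀ i, Fintype (D i)] {Dmax : ℕ}
    (hD : ∀ i, Fintype.card (D i) ≤ Dmax) (hDmax : 1 ≤ Dmax) :
    ∀ (t : DTree D) (k : ℕ), t.depthLE k → t.trueLeafCount ≤ Dmax ^ k
  | .leaf b, k, _ => by
    have : (leaf b : DTree D).trueLeafCount ≤ 1 := by cases b <;> simp [trueLeafCount]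
    exact this.trans (Nat.one_le_pow _ _ hDmax)
  | .node _ _, 0, h => h.elim
  | .node i ch, k + 1, h =>
    calc ∑ d, (ch d).trueLeafCount ≤ ∑ _d : D i, Dmax ^ k :=
          Finset.sum_le_sum fun d _ => trueLeafCount_le_pow hD hDmax (ch d) k (h d)
      _ = Fintype.card (D i) * Dmax ^ k := by simp
      _ ≤ Dmax ^ (k + 1) := by rw [pow_succ']; exact Nat.mul_le_mul_right _ (hD i)

theorem filter_eval_node_of_forall_eq {i : Fin n} {ch : D i → DTree D} {d : D i}
    {s : Finset (∀ i, D i)} (hs : ∀ x ∈ s, x i = d) :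
    s.filter (fun x => (node i ch).eval x = true) = s.filter (fun x => (ch d).eval x = true) :=
  Finset.filter_congr fun x hx => by rw [eval, hs x hx]

end DTree

section Cylinder

variable {n : ℕ} {D : Fin n → Type*} [∀ i, Fintype (D i)] [∀ i, DecidableEq (D i)]

def cylinder (I : Finset (Fin n)) (v : ∀ i, D i) : Finset (∀ i, D i) :=
  Finset.univ.filter fun x => ∀ i ∈ I, x i = v i

theorem mem_cylinder {I : Finset (Fin n)} {v x : ∀ i, D i} :
    x ∈ cylinder I v ↔ ∀ i ∈ I, x i = v i := by
  simp [cylinder]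

theorem cylinder_empty (v : ∀ i, D i) : cylinder ∅ v = Finset.univ := by
  ext x; simp [mem_cylinder]

theorem filter_cylinder_apply_eq {I : Finset (Fin n)} {i : Fin n} (hi : i ∉ I)
    (v : ∀ i, D i) (d : D i) :
    (cylinder I v).filter (fun x => x i = d) = cylinder (insert i I) (Function.update v i d) := by
  ext x
  simp only [Finset.mem_filter, mem_cylinder, Finset.forall_mem_insert, Function.update_self]
  constructor
  · rintro ⟨hx, rfl⟩
    exact ⟨rfl, fun j hj => by rw [Function.update_of_ne (ne_of_mem_of_not_mem hj hi), hx j hj]⟩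
  · rintro ⟨rfl, hx⟩
    exact ⟨fun j hj => by rw [hx j hj, Function.update_of_ne (ne_of_mem_of_not_mem hj hi)], rfl⟩

theorem abs_sum_filter_eval_le_trueLeafCount_mul {g : (∀ i, D i) → ℝ} {δ : ℝ} {K : ℕ}
    (hg : ∀ I : Finset (Fin n), I.card ≤ K → ∀ v, |∑ x ∈ cylinder I v, g x| ≤ δ) (hδ : 0 ≤ δ) :
    ∀ (t : DTree D) (k : ℕ), t.depthLE k → ∀ (I : Finset (Fin n)) (v : ∀ i, D i),
      I.card + k ≤ K →
      |∑ x ∈ (cylinder I v).filter (fun x => t.eval x = true), g x| ≤ t.trueLeafCount * δ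
  | .leaf false, _, _, _, _, _ => by simp [DTree.eval, DTree.trueLeafCount]
  | .leaf true, _, _, I, v, hI => by
    simpa [DTree.eval, DTree.trueLeafCount] using hg I (by omega) v
  | .node _ _, 0, h, _, _, _ => h.elim
  | .node i ch, k + 1, h, I, v, hI => by
    by_cases hi : i ∈ I
    · rw [DTree.filter_eval_node_of_forall_eq fun x hx => mem_cylinder.1 hx i hi]
      have hle : (ch (v i)).trueLeafCount ≤ (DTree.node i ch).trueLeafCount :=
        Finset.single_le_sum (f := fun d => (ch d).trueLeafCount) (fun _ _ => Nat.zero_le _)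
          (Finset.mem_univ _)
      calc _ ≤ (ch (v i)).trueLeafCount * δ :=
            abs_sum_filter_eval_le_trueLeafCount_mul hg hδ (ch (v i)) k (h _) I v (by omega)
        _ ≤ _ := by gcongr
    · have hfiber (d : D i) :
          ((cylinder I v).filter (fun x => (DTree.node i ch).eval x = true)).filter
              (fun x => x i = d)
            = (cylinder (insert i I) (Function.update v i d)).filter
                (fun x => (ch d).eval x = true) := by
        rw [Finset.filter_comm, filter_cylinder_apply_eq hi,
          DTree.filter_eval_node_of_forall_eq fun x hx => ?_]
        simpa using mem_cylinder.1 hx i (Finset.mem_insert_self i I)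
      rw [← Finset.sum_fiberwise _ (fun x => x i)]
      calc _ ≤ ∑ d, |∑ x ∈ (cylinder (insert i I) (Function.update v i d)).filter
                (fun x => (ch d).eval x = true), g x| := by
            simp only [hfiber]; exact Finset.abs_sum_le_sum_abs _ _
        _ ≤ ∑ d, ((ch d).trueLeafCount * δ : ℝ) := by
            gcongr with d
            refine abs_sum_filter_eval_le_trueLeafCount_mul hg hδ (ch d) k (h d) _ _ ?_
            rw [Finset.card_insert_of_notMem hi]; omega
        _ = (DTree.node i ch).trueLeafCount * δ := by
            simp [DTree.trueLeafCount, Finset.sum_mul]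

end Cylinder

section Approximation

variable {n : ℕ} {D : Fin n → Type*} [∀ i, Fintype (D i)] [∀ i, DecidableEq (D i)]

def IsApproximation (k : ℕ) (δ : ℝ) (P Y : (∀ i, D i) → ℝ) : Prop :=
  ∀ I : Finset (Fin n), I.card ≤ k → ∀ v : ∀ i, D i,
    |∑ x ∈ cylinder I v, P x - ∑ x ∈ cylinder I v, Y x| ≤ δ

theorem abs_sum_filter_le_of_dtComplexityLE [∀ i, Nonempty (D i)] {g : (∀ i, D i) → ℝ}
    {δ : ℝ} {k Dmax : ℕ} (hD : ∀ i, Fintype.card (D i) ≤ Dmax) (hDmax : 1 ≤ Dmax) (hδ : 0 ≤ δ)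
    (hg : ∀ I : Finset (Fin n), I.card ≤ k → ∀ v, |∑ x ∈ cylinder I v, g x| ≤ δ)
    {f : (∀ i, D i) → Bool} (hf : DTComplexityLE D f k) :
    |∑ x ∈ Finset.univ.filter (fun x => f x = true), g x| ≤ Dmax ^ k * δ := by
  obtain ⟨t, ht, hft⟩ := hf
  have hbound := abs_sum_filter_eval_le_trueLeafCount_mul hg hδ t k ht ∅ (Classical.arbitrary _)
    (by simp)
  simp only [cylinder_empty, hft] at hbound
  refine hbound.trans ?_
  gcongr
  exact_mod_cast t.trueLeafCount_le_pow hD hDmax k ht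

theorem sum_filter_le_sum_filter_prod_add_of_isApproximation [∀ i, Nonempty (D i)]
    {p : ∀ i, D i → ℝ} {Y : (∀ i, D i) → ℝ} {δ : ℝ} {k Dmax : ℕ}
    (hD : ∀ i, Fintype.card (D i) ≤ Dmax) (hδ : 0 ≤ δ) (hY1 : ∑ x, Y x = 1)
    (happrox : IsApproximation k δ (fun x => ∏ i, p i (x i)) Y)
    {f : (∀ i, D i) → Bool} (hf : DTComplexityLE D f k) :
    ∑ x ∈ Finset.univ.filter (fun x => f x = true), Y x
      ≤ ∑ x ∈ Finset.univ.filter (fun x => f x = true), ∏ i, p i (x i) + Dmax ^ k * δ := by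
  rcases Nat.eq_zero_or_pos Dmax with hDmax | hDmax
  · -- `Dmax = 0` forces `n = 0`: the space is a single point, where `Y` and the product agree.
    have : IsEmpty (Fin n) := ⟨fun i => (Fintype.card_pos.trans_le (hD i)).ne' hDmax⟩
    have hY (x : ∀ i, D i) : Y x = ∏ i, p i (x i) := by
      rw [Finset.prod_of_isEmpty, ← hY1, Fintype.sum_subsingleton _ x]
    simp only [hY, le_add_iff_nonneg_right]
    positivity
  · have hbound := abs_sum_filter_le_of_dtComplexityLE hD hDmax hδ
      (g := fun x => ∏ i, p i (x i) - Y x)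
      (fun I hI v => by simpa only [Finset.sum_sub_distrib] using happrox I hI v) hf
    rw [Finset.sum_sub_distrib] at hbound
    linarith [(abs_le.1 hbound).1]

end Approximation

theorem exists_pos_forall_eq_false_of_sum_filter_lt_one {α ι : Type*} [Fintype α] [Fintype ι]
    {Y : α → ℝ} (hY0 : ∀ x, 0 ≤ Y x) (hY1 : ∑ x, Y x = 1) {f : ι → α → Bool}
    (h : ∑ j, ∑ x ∈ Finset.univ.filter (fun x => f j x = true), Y x < 1) :
    ∃ s, 0 < Y s ∧ ∀ j, f j s = false := by
  classical
  by_contra! hcover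
  have hle (x : α) : Y x ≤ ∑ j ∈ Finset.univ.filter (fun j => f j x = true), Y x := by
    rcases (hY0 x).eq_or_lt with hx | hx
    · simp [← hx]
    · obtain ⟨j, hj⟩ := hcover x hx
      exact Finset.single_le_sum (fun _ _ => hY0 x) (by simpa using hj)
  have : ∑ x, Y x ≤ ∑ j, ∑ x ∈ Finset.univ.filter (fun x => f j x = true), Y x := by
    simp_rw [Finset.sum_filter] at hle ⊢
    rw [Finset.sum_comm]
    exact Finset.sum_le_sum fun x _ => hle x
  linarith

theorem limited_independence_point_avoiding_all_events_general {n : ℕ} (D : Fin n → Type*)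
    [∀ i, Fintype (D i)] [∀ i, Nonempty (D i)] [∀ i, DecidableEq (D i)]
    (Dmax : ℕ) (hD : ∀ i, Fintype.card (D i) ≤ Dmax)
    (p : ∀ i, D i → ℝ)
    (Y : (∀ i, D i) → ℝ) (hY0 : ∀ x, 0 ≤ Y x) (hY1 : ∑ x, Y x = 1)
    (k N : ℕ) (f : Fin N → (∀ i, D i) → Bool)
    (hf : ∀ j, DTComplexityLE D (f j) k)
    (hexp : ∑ j : Fin N,
        ∑ x ∈ Finset.univ.filter (fun x : ∀ i, D i => f j x = true), ∏ i, p i (x i)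
      ≤ 1 / 2)
    (δ : ℝ) (hδ : 0 ≤ δ)
    (happrox : ∀ I : Finset (Fin n), I.card ≤ k → ∀ v : ∀ i, D i,
      |∑ x ∈ Finset.univ.filter (fun x : ∀ i, D i => ∀ i ∈ I, x i = v i), ∏ i, p i (x i)
        - ∑ x ∈ Finset.univ.filter (fun x : ∀ i, D i => ∀ i ∈ I, x i = v i), Y x| ≤ δ)
    (hsmall : (N : ℝ) * (Dmax : ℝ) ^ k * δ < 1 / 2) :
    (∑ j : Fin N,
        ∑ x ∈ Finset.univ.filter (fun x : ∀ i, D i => f j x = true), Y x) < 1 ∧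
      ∃ s : ∀ i, D i, 0 < Y s ∧ ∀ j, f j s = false := by
  have hlt : ∑ j, ∑ x ∈ Finset.univ.filter (fun x => f j x = true), Y x < 1 :=
    calc _ ≤ ∑ j, (∑ x ∈ Finset.univ.filter (fun x => f j x = true), ∏ i, p i (x i)
              + Dmax ^ k * δ) :=
          Finset.sum_le_sum fun j _ =>
            sum_filter_le_sum_filter_prod_add_of_isApproximation hD hδ hY1 happrox (hf j)
      _ = ∑ j, ∑ x ∈ Finset.univ.filter (fun x => f j x = true), ∏ i, p i (x i)
            + N * Dmax ^ k * δ := by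
          simp [Finset.sum_add_distrib, mul_assoc]
      _ < 1 := by linarith
  exact ⟨hlt, exists_pos_forall_eq_false_of_sum_filter_lt_one hY0 hY1 hlt⟩

/-- **Abstract parallel derandomization.**
`p i` are the marginals of a product distribution `𝒫` on `S = ∀ i, D i`
(so `𝒫 x = ∏ i, p i (x i)`), and `f 1, …, f N` have decision tree complexity
at most `k` with `∑ j, E_𝒫[f j] ≤ 1/2`.  If `Y` is a distribution on `S` that
is a `(k,δ)`-approximation of `𝒫` with `N · Dmax^k · δ < 1/2`, then
`∑ j, E_Y[f j] < 1`; consequently some point `s` of positive `Y`-probability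
satisfies `f j s = false` for every `j`. -/
theorem limited_independence_point_avoiding_all_events {n : ℕ} (D : Fin n → Type*)
    [∀ i, Fintype (D i)] [∀ i, Nonempty (D i)] [∀ i, DecidableEq (D i)]
    (Dmax : ℕ) (hD : ∀ i, Fintype.card (D i) ≤ Dmax)
    (p : ∀ i, D i → ℝ) (hp0 : ∀ i d, 0 ≤ p i d) (hp1 : ∀ i, ∑ d, p i d = 1)
    (Y : (∀ i, D i) → ℝ) (hY0 : ∀ x, 0 ≤ Y x) (hY1 : ∑ x, Y x = 1)
    (k N : ℕ) (f : Fin N → (∀ i, D i) → Bool)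
    (hf : ∀ j, DTComplexityLE D (f j) k)
    (hexp : ∑ j : Fin N,
        ∑ x ∈ Finset.univ.filter (fun x : ∀ i, D i => f j x = true), ∏ i, p i (x i)
      ≤ 1 / 2)
    (δ : ℝ) (hδ : 0 ≤ δ)
    (happrox : ∀ I : Finset (Fin n), I.card ≤ k → ∀ v : ∀ i, D i,
      |∑ x ∈ Finset.univ.filter (fun x : ∀ i, D i => ∀ i ∈ I, x i = v i), ∏ i, p i (x i)
        - ∑ x ∈ Finset.univ.filter (fun x : ∀ i, D i => ∀ i ∈ I, x i = v i), Y x| ≤ δ)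
    (hsmall : (N : ℝ) * (Dmax : ℝ) ^ k * δ < 1 / 2) :
    (∑ j : Fin N,
        ∑ x ∈ Finset.univ.filter (fun x : ∀ i, D i => f j x = true), Y x) < 1 ∧
      ∃ s : ∀ i, D i, 0 < Y s ∧ ∀ j, f j s = false :=
  limited_independence_point_avoiding_all_events_general D Dmax hD p Y hY0 hY1 k N f hf hexp δ hδ
    happrox hsmall
end
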